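/- In Setup B, let J₁, J₂ ∈ Λ with n+1 ∉ J₁ or n+1 ∉ J₂, let c¹ = (c¹_i)_{i∈J₁} and c² = (c²_i)_{i∈J₂} be families of integers (with a choice of i₀ ∈ I'∖J made for each of J₁, J₂ that contains n+1, defining the corresponding F-set). If C(J₁,c¹) is not contained in C(J₂,c²), then the set difference F(J₁,c¹) ∖ F(J₂,c²) is nonempty and, equipped with the subspace topology from ℝⁿ, is a contractible topological space. -/

import Mathlib

open scoped RealInnerProductSpace BigOperators

noncomputable section

/-- Euclidean space `ℝⁿ` with the standard inner product. -/
abbrev E (n : ℕ) : Type := EuclideanSpace ℝ (Fin n)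

/-- The index set `I' = {1,…,n'}` inside `Ī = {1,…,n+1}` (index `Fin.last n`
plays the role of `n+1`). -/
def Iprime (n n' : ℕ) : Finset (Fin (n + 1)) := Finset.univ.filter fun i => i.val < n'

/-- `C(J,c) := {x ∈ ℝⁿ : ⟨x, b_i⟩ > c_i for all i ∈ J}`. -/
def CSet (n : ℕ) (b : Fin (n + 1) → E n) (J : Finset (Fin (n + 1)))
    (c : Fin (n + 1) → ℤ) : Set (E n) :=
  {x | ∀ i ∈ J, (c i : ℝ) < ⟪x, b i⟫}

/-- A multi-index `𝔪 = (m_i)_{i ∈ I'∖{i₀}}` is admissible if `m_i ≥ 0` for every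
`i ∈ I' ∩ J` (recall `i₀ ∉ J`). -/
def Admissible (n n' : ℕ) (J : Finset (Fin (n + 1))) (m : Fin (n + 1) → ℤ) : Prop :=
  ∀ i ∈ Iprime n n' ∩ J, 0 ≤ m i

/-- The ceiling bound
`⌈(c_{n+1} − Σ_{i∈I'∩J} α_i(c_i+m_i) − Σ_{i∈I'∩K₁} α_i m_i)/α_{i₀}⌉`,
where `K₁ = Ī∖(J∪{i₀})`, so `I'∩K₁ = (I'∖J)∖{i₀}`. -/
def ceilB (n n' : ℕ) (α : Fin (n + 1) → ℚ) (J : Finset (Fin (n + 1)))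
    (i₀ : Fin (n + 1)) (c m : Fin (n + 1) → ℤ) : ℤ :=
  ⌈((c (Fin.last n) : ℚ) - ∑ i ∈ Iprime n n' ∩ J, α i * ((c i : ℚ) + (m i : ℚ))
      - ∑ i ∈ (Iprime n n' \ J).erase i₀, α i * (m i : ℚ)) / α i₀⌉

/-- `V(J,c,𝔪)` as in Setup B. -/
def VSet (n n' : ℕ) (b : Fin (n + 1) → E n) (α : Fin (n + 1) → ℚ)
    (J : Finset (Fin (n + 1))) (i₀ : Fin (n + 1)) (c m : Fin (n + 1) → ℤ) :
    Set (E n) :=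
  {x | (∀ i ∈ Iprime n n' ∩ J, ((c i : ℝ) + (m i : ℝ)) < ⟪x, b i⟫)
    ∧ (∀ i ∈ (Iprime n n' \ J).erase i₀, (m i : ℝ) < ⟪x, b i⟫)
    ∧ (∀ i ∈ (J \ Iprime n n').erase (Fin.last n), (c i : ℝ) < ⟪x, b i⟫)
    ∧ ((ceilB n n' α J i₀ c m : ℝ) < ⟪x, b i₀⟫)}

/-- `F(J,c) := ⋃_{𝔪 admissible} V(J,c,𝔪)` (for `n+1 ∈ J`, with the choice `i₀`). -/
def FSetB (n n' : ℕ) (b : Fin (n + 1) → E n) (α : Fin (n + 1) → ℚ)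
    (J : Finset (Fin (n + 1))) (i₀ : Fin (n + 1)) (c : Fin (n + 1) → ℤ) : Set (E n) :=
  {x | ∃ m : Fin (n + 1) → ℤ, Admissible n n' J m ∧ x ∈ VSet n n' b α J i₀ c m}

/-- `F(J,c)` in general: the union above when `n+1 ∈ J`, and `C(J,c)` otherwise. -/
def FSetB' (n n' : ℕ) (b : Fin (n + 1) → E n) (α : Fin (n + 1) → ℚ)
    (J : Finset (Fin (n + 1))) (i₀ : Fin (n + 1)) (c : Fin (n + 1) → ℤ) : Set (E n) :=
  if Fin.last n ∈ J then FSetB n n' b α J i₀ c else CSet n b J c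

/-!
Work in the coordinates `y_i = ⟪x, b_i⟫`, `i ≤ n`. Since `b_{n+1} = ∑ α_i b_i` with `α_i ≥ 0`,
every `C(J,c)` and every `V(J,c,𝔪)`, hence every `F(J,c)`, is an upper set, and
`C(J, c + e_{n+1}) ⊆ F(J,c) ⊆ C(J,c)` (the first inclusion because `∑ α_i ≤ 1`).

If `n+1 ∉ J₁`, then `C(J₁,c¹)` is convex and closed under coordinatewise `min`, while the complement
of `F(J₂,c²)` is a lower set; for any point `q` of the difference the straight-line homotopies
`y ⇝ y ⊓ q ⇝ q` stay in it.

If `n+1 ∈ J₁`, then `n+1 ∉ J₂`, and some `L ∈ I' ∖ J₂` is a coordinate that `C(J₂,c²)` ignores.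
Making the `L`-coordinate large gives a point `q ∈ C(J₁, c¹ + e_{n+1}) ⊆ F(J₁,c¹)` lying in every
half-space `{⟪·, b_j⟫ ≤ c²_j}`, `j ∈ J₂`, that meets `C(J₁,c¹)`. Every point `y` of the difference
lies in such a half-space together with `q`, so the homotopies `y ⇝ y ⊔ q ⇝ q` stay in it.
-/

theorem Finset.sum_eq_sum_inter_add_sum_sdiff_erase_add {ι M : Type*} [AddCommMonoid M]
    [DecidableEq ι] {s t : Finset ι} {a : ι} (ha : a ∈ s \ t) (f : ι → M) :
    ∑ i ∈ s, f i = ∑ i ∈ s ∩ t, f i + ∑ i ∈ (s \ t).erase a, f i + f a := by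
  rw [add_assoc, Finset.sum_erase_add _ _ ha, Finset.sum_inter_add_sum_sdiff]

section StraightLineHomotopy

variable {E : Type*} [AddCommGroup E] [Module ℝ E] [TopologicalSpace E] [IsTopologicalAddGroup E]
  [ContinuousSMul ℝ E]

theorem ContinuousMap.homotopic_of_segment_subset {X : Type*} [TopologicalSpace X] {D : Set E}
    (f g : C(X, D)) (h : ∀ x, segment ℝ (f x : E) (g x) ⊆ D) : f.Homotopic g :=
  ⟨{ toFun := fun p => ⟨AffineMap.lineMap (f p.2 : E) (g p.2) (p.1 : ℝ),
        h p.2 (lineMap_mem_segment ℝ _ _ p.1.2)⟩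
     continuous_toFun := by
       refine Continuous.subtype_mk ?_ _
       simp only [AffineMap.lineMap_apply_module]
       fun_prop
     map_zero_left := fun x => by simp
     map_one_left := fun x => by simp }⟩

theorem contractibleSpace_of_segment_subset {D : Set E} {q : E} (hq : q ∈ D) {r : E → E}
    (hr : Continuous r) (h₁ : ∀ x ∈ D, segment ℝ x (r x) ⊆ D)
    (h₂ : ∀ x ∈ D, segment ℝ (r x) q ⊆ D) : ContractibleSpace D := by
  let ρ : C(D, D) := ⟨fun x => ⟨r x, h₁ x x.2 (right_mem_segment ℝ _ _)⟩, by fun_prop⟩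
  exact (contractible_iff_id_nullhomotopic D).2 ⟨⟨q, hq⟩,
    (ContinuousMap.homotopic_of_segment_subset _ ρ fun x => h₁ x x.2).trans
      (ContinuousMap.homotopic_of_segment_subset ρ _ fun x => h₂ x x.2)⟩

end StraightLineHomotopy

theorem Homeomorph.contractibleSpace_preimage_symm_iff {X Y : Type*} [TopologicalSpace X]
    [TopologicalSpace Y] (e : X ≃ₜ Y) (s : Set X) :
    ContractibleSpace (e.symm ⁻¹' s) ↔ ContractibleSpace s := by
  rw [← e.image_eq_preimage_symm]
  exact (e.image s).contractibleSpace_iff.symm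

section PiOrder

variable {ι : Type*} {s t : Set (ι → ℝ)} {q : ι → ℝ}

theorem contractibleSpace_diff_of_infClosed (hs : Convex ℝ s) (hs' : InfClosed s)
    (ht : IsUpperSet t) (hq : q ∈ s \ t) : ContractibleSpace ↥(s \ t) := by
  refine contractibleSpace_of_segment_subset hq (r := (· ⊓ q))
    (continuous_pi fun i => (continuous_apply i).min continuous_const) ?_ ?_
  · intro x hx z hz
    refine ⟨hs.segment_subset hx.1 (hs' hx.1 hq.1) hz, fun hzt => hx.2 (ht ?_ hzt)⟩
    rw [segment_symm] at hz
    exact (segment_subset_Icc inf_le_left hz).2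
  · intro x hx z hz
    refine ⟨hs.segment_subset (hs' hx.1 hq.1) hq.1 hz, fun hzt => hq.2 (ht ?_ hzt)⟩
    exact (segment_subset_Icc inf_le_right hz).2

theorem contractibleSpace_diff_of_supClosed (hs : IsUpperSet s) (hq : q ∈ s \ t)
    (ht : ∀ x ∈ s \ t, ∃ H : Set (ι → ℝ),
      Convex ℝ H ∧ SupClosed H ∧ Disjoint H t ∧ x ∈ H ∧ q ∈ H) :
    ContractibleSpace ↥(s \ t) := by
  refine contractibleSpace_of_segment_subset hq (r := (· ⊔ q))
    (continuous_pi fun i => (continuous_apply i).max continuous_const) ?_ ?_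
  · intro x hx z hz
    obtain ⟨H, hH, hH', hHt, hxH, hqH⟩ := ht x hx
    refine ⟨hs (segment_subset_Icc le_sup_left hz).1 hx.1, hHt.notMem_of_mem_left ?_⟩
    exact hH.segment_subset hxH (hH' hxH hqH) hz
  · intro x hx z hz
    obtain ⟨H, hH, hH', hHt, hxH, hqH⟩ := ht x hx
    rw [segment_symm] at hz
    refine ⟨hs (segment_subset_Icc le_sup_right hz).1 hq.1, hHt.notMem_of_mem_left ?_⟩
    exact hH.segment_subset hqH (hH' hxH hqH) hz

end PiOrder

namespace SetupB

variable {n n' : ℕ} {b : Fin (n + 1) → E n} {α : Fin (n + 1) → ℚ}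
  {J J₁ J₂ : Finset (Fin (n + 1))} {i₀ L : Fin (n + 1)} {c c₁ c₂ m : Fin (n + 1) → ℤ}

lemma last_notMem_Iprime (hn'n : n' ≤ n) : Fin.last n ∉ Iprime n n' := by
  simpa [Iprime] using hn'n

lemma inner_last (hlast : b (Fin.last n) = ∑ i ∈ Iprime n n', (α i : ℝ) • b i) (x : E n) :
    ⟪x, b (Fin.last n)⟫ = ∑ i ∈ Iprime n n', (α i : ℝ) * ⟪x, b i⟫ := by
  simp only [hlast, inner_sum, real_inner_smul_right]

def UpwardClosed (b : Fin (n + 1) → E n) (s : Set (E n)) : Prop :=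
  ∀ ⦃x x' : E n⦄, x ∈ s → (∀ i, ⟪x, b i⟫ ≤ ⟪x', b i⟫) → x' ∈ s

lemma upwardClosed_CSet : UpwardClosed b (CSet n b J c) :=
  fun _ _ hx h i hi => (hx i hi).trans_le (h i)

lemma upwardClosed_FSetB : UpwardClosed b (FSetB n n' b α J i₀ c) := by
  rintro x x' ⟨m, hm, h₁, h₂, h₃, h₄⟩ h
  exact ⟨m, hm, fun i hi => (h₁ i hi).trans_le (h i), fun i hi => (h₂ i hi).trans_le (h i),
    fun i hi => (h₃ i hi).trans_le (h i), h₄.trans_le (h i₀)⟩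

lemma upwardClosed_FSetB' : UpwardClosed b (FSetB' n n' b α J i₀ c) := by
  unfold FSetB'
  split_ifs
  exacts [upwardClosed_FSetB, upwardClosed_CSet]

lemma convex_CSet : Convex ℝ (CSet n b J c) := by
  simp only [CSet, Set.ofPred_forall]
  exact convex_iInter₂ fun i _ => convex_halfSpace_gt
    ⟨fun x y => inner_add_left x y (b i), fun a x => real_inner_smul_left x (b i) a⟩ _

lemma sub_le_mul_ceilB (hα₀ : 0 < α i₀) :
    (c (Fin.last n) : ℝ) - ∑ i ∈ Iprime n n' ∩ J, (α i : ℝ) * (c i + m i)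
      - ∑ i ∈ (Iprime n n' \ J).erase i₀, (α i : ℝ) * m i ≤ α i₀ * ceilB n n' α J i₀ c m := by
  have h := (div_le_iff₀ hα₀).1 (Int.le_ceil ((c (Fin.last n) - ∑ i ∈ Iprime n n' ∩ J,
    α i * (c i + m i) - ∑ i ∈ (Iprime n n' \ J).erase i₀, α i * m i : ℚ) / α i₀))
  have h' := (Rat.cast_le (K := ℝ)).2 h
  push_cast at h'
  rw [ceilB]
  linarith

lemma mul_ceilB_lt (hα₀ : 0 < α i₀) :
    α i₀ * ceilB n n' α J i₀ c m < (c (Fin.last n) : ℝ) - ∑ i ∈ Iprime n n' ∩ J,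
      (α i : ℝ) * (c i + m i) - ∑ i ∈ (Iprime n n' \ J).erase i₀, (α i : ℝ) * m i + α i₀ := by
  have h := Int.ceil_lt_add_one ((c (Fin.last n) - ∑ i ∈ Iprime n n' ∩ J,
    α i * (c i + m i) - ∑ i ∈ (Iprime n n' \ J).erase i₀, α i * m i : ℚ) / α i₀)
  rw [← sub_lt_iff_lt_add, lt_div_iff₀ hα₀] at h
  have h' := (Rat.cast_lt (K := ℝ)).2 h
  push_cast at h'
  rw [ceilB]
  linarith

lemma FSetB_subset_CSet (hα : ∀ i ∈ Iprime n n', 0 < α i)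
    (hlast : b (Fin.last n) = ∑ i ∈ Iprime n n', (α i : ℝ) • b i)
    (hi₀ : i₀ ∈ Iprime n n' \ J) : FSetB n n' b α J i₀ c ⊆ CSet n b J c := by
  rintro x ⟨m, hm, h₁, h₂, h₃, h₄⟩ i hi
  have hαR : ∀ i ∈ Iprime n n', (0 : ℝ) ≤ α i := fun i hi => by exact_mod_cast (hα i hi).le
  by_cases hil : i = Fin.last n
  · subst hil
    have hα₀ : 0 < α i₀ := hα i₀ (Finset.mem_sdiff.1 hi₀).1
    have s₁ : ∑ i ∈ Iprime n n' ∩ J, (α i : ℝ) * (c i + m i)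
        ≤ ∑ i ∈ Iprime n n' ∩ J, (α i : ℝ) * ⟪x, b i⟫ :=
      Finset.sum_le_sum fun i hi => mul_le_mul_of_nonneg_left (h₁ i hi).le
        (hαR i (Finset.mem_inter.1 hi).1)
    have s₂ : ∑ i ∈ (Iprime n n' \ J).erase i₀, (α i : ℝ) * m i
        ≤ ∑ i ∈ (Iprime n n' \ J).erase i₀, (α i : ℝ) * ⟪x, b i⟫ :=
      Finset.sum_le_sum fun i hi => mul_le_mul_of_nonneg_left (h₂ i hi).le
        (hαR i (Finset.mem_sdiff.1 (Finset.mem_of_mem_erase hi)).1)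
    have s₃ : (α i₀ : ℝ) * ceilB n n' α J i₀ c m < α i₀ * ⟪x, b i₀⟫ :=
      mul_lt_mul_of_pos_left h₄ (by exact_mod_cast hα₀)
    rw [inner_last hlast, Finset.sum_eq_sum_inter_add_sum_sdiff_erase_add hi₀]
    linarith [sub_le_mul_ceilB (n' := n') (J := J) (c := c) (m := m) hα₀]
  · by_cases hiI : i ∈ Iprime n n'
    · have hiIJ : i ∈ Iprime n n' ∩ J := Finset.mem_inter.2 ⟨hiI, hi⟩
      have : (0 : ℝ) ≤ m i := by exact_mod_cast hm i hiIJ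
      linarith [h₁ i hiIJ]
    · exact h₃ i (Finset.mem_erase.2 ⟨hil, Finset.mem_sdiff.2 ⟨hi, hiI⟩⟩)

lemma ceilB_lt_inner (hα : ∀ i ∈ Iprime n n', 0 < α i) (hαsum : ∑ i ∈ Iprime n n', α i ≤ 1)
    (hlast : b (Fin.last n) = ∑ i ∈ Iprime n n', (α i : ℝ) • b i) (hi₀ : i₀ ∈ Iprime n n' \ J)
    {x : E n} (hs : (c (Fin.last n) : ℝ) + 1 < ⟪x, b (Fin.last n)⟫)
    (hm₁ : ∀ i ∈ Iprime n n' ∩ J, ⟪x, b i⟫ - 1 ≤ c i + m i)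
    (hm₂ : ∀ i ∈ (Iprime n n' \ J).erase i₀, ⟪x, b i⟫ - 1 ≤ m i) :
    (ceilB n n' α J i₀ c m : ℝ) < ⟪x, b i₀⟫ := by
  have hαR : ∀ i ∈ Iprime n n', (0 : ℝ) ≤ α i := fun i hi => by exact_mod_cast (hα i hi).le
  have hα₀ : 0 < α i₀ := hα i₀ (Finset.mem_sdiff.1 hi₀).1
  have s₁ : ∑ i ∈ Iprime n n' ∩ J, (α i : ℝ) * (⟪x, b i⟫ - 1)
      ≤ ∑ i ∈ Iprime n n' ∩ J, (α i : ℝ) * (c i + m i) :=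
    Finset.sum_le_sum fun i hi =>
      mul_le_mul_of_nonneg_left (hm₁ i hi) (hαR i (Finset.mem_inter.1 hi).1)
  have s₂ : ∑ i ∈ (Iprime n n' \ J).erase i₀, (α i : ℝ) * (⟪x, b i⟫ - 1)
      ≤ ∑ i ∈ (Iprime n n' \ J).erase i₀, (α i : ℝ) * m i :=
    Finset.sum_le_sum fun i hi => mul_le_mul_of_nonneg_left (hm₂ i hi)
      (hαR i (Finset.mem_sdiff.1 (Finset.mem_of_mem_erase hi)).1)
  have s₃ : ⟪x, b (Fin.last n)⟫ - 1 ≤ ∑ i ∈ Iprime n n', (α i : ℝ) * (⟪x, b i⟫ - 1) := by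
    have : ∑ i ∈ Iprime n n', (α i : ℝ) ≤ 1 := by exact_mod_cast hαsum
    simp only [mul_sub, mul_one, Finset.sum_sub_distrib, inner_last hlast]
    linarith
  rw [Finset.sum_eq_sum_inter_add_sum_sdiff_erase_add hi₀] at s₃
  refine lt_of_mul_lt_mul_left ?_ (by exact_mod_cast hα₀.le : (0 : ℝ) ≤ α i₀)
  linarith [mul_ceilB_lt (n' := n') (J := J) (c := c) (m := m) hα₀]

/-- Take `m_i = ⌈⟪x, b i⟫⌉ - 1 - c_i` (`- c_i` only for `i ∈ J`): every lower bound of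
`V(J,c,𝔪)` other than the one on `⟪x, b i₀⟫` is then within `1` of `⟪x, b i⟫`, and the slack
`1 ≥ ∑ α_i` added to `c_{n+1}` covers these gaps. -/
lemma CSet_subset_FSetB (hα : ∀ i ∈ Iprime n n', 0 < α i) (hαsum : ∑ i ∈ Iprime n n', α i ≤ 1)
    (hlast : b (Fin.last n) = ∑ i ∈ Iprime n n', (α i : ℝ) • b i) (hJ : Fin.last n ∈ J)
    (hi₀ : i₀ ∈ Iprime n n' \ J) :
    CSet n b J (c + Pi.single (Fin.last n) 1) ⊆ FSetB n n' b α J i₀ c := by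
  intro x hx
  have hc : ∀ i ∈ J, (c i : ℝ) < ⟪x, b i⟫ := by
    intro i hi
    have h0 : (0 : ℝ) ≤ (Pi.single (M := fun _ => ℤ) (Fin.last n) 1 i : ℤ) := by
      rw [Pi.single_apply]; split_ifs <;> norm_num
    have := hx i hi
    push_cast [Pi.add_apply] at this
    linarith
  have hs : (c (Fin.last n) : ℝ) + 1 < ⟪x, b (Fin.last n)⟫ := by
    simpa using hx _ hJ
  set m : Fin (n + 1) → ℤ := fun i => ⌈⟪x, b i⟫⌉ - 1 - if i ∈ J then c i else 0 with hm
  have hm₁ : ∀ i ∈ Iprime n n' ∩ J, (c i : ℝ) + m i = ⌈⟪x, b i⟫⌉ - 1 := fun i hi => by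
    simp [hm, (Finset.mem_inter.1 hi).2]
  have hm₂ : ∀ i ∈ (Iprime n n' \ J).erase i₀, (m i : ℝ) = ⌈⟪x, b i⟫⌉ - 1 := fun i hi => by
    simp [hm, (Finset.mem_sdiff.1 (Finset.mem_of_mem_erase hi)).2]
  refine ⟨m, fun i hi => ?_, fun i hi => ?_, fun i hi => ?_,
    fun i hi => hc i (Finset.mem_sdiff.1 (Finset.mem_of_mem_erase hi)).1, ?_⟩
  · have := Int.lt_ceil.2 (hc i (Finset.mem_inter.1 hi).2)
    simp only [hm, if_pos (Finset.mem_inter.1 hi).2]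
    omega
  · rw [hm₁ i hi]
    linarith [Int.ceil_lt_add_one ⟪x, b i⟫]
  · rw [hm₂ i hi]
    linarith [Int.ceil_lt_add_one ⟪x, b i⟫]
  · exact ceilB_lt_inner hα hαsum hlast hi₀ hs
      (fun i hi => by rw [hm₁ i hi]; linarith [Int.le_ceil ⟪x, b i⟫])
      (fun i hi => by rw [hm₂ i hi]; linarith [Int.le_ceil ⟪x, b i⟫])

lemma FSetB'_subset_CSet (hα : ∀ i ∈ Iprime n n', 0 < α i)
    (hlast : b (Fin.last n) = ∑ i ∈ Iprime n n', (α i : ℝ) • b i)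
    (hi₀ : Fin.last n ∈ J → i₀ ∈ Iprime n n' \ J) : FSetB' n n' b α J i₀ c ⊆ CSet n b J c := by
  unfold FSetB'
  split_ifs with hJ
  exacts [FSetB_subset_CSet hα hlast (hi₀ hJ), subset_rfl]

def coordEquiv (hspan : Submodule.span ℝ (Set.range fun i : Fin n => b i.castSucc) = ⊤) :
    E n ≃L[ℝ] (Fin n → ℝ) :=
  LinearEquiv.toContinuousLinearEquiv <| LinearMap.linearEquivOfInjective
    (ContinuousLinearMap.pi fun j => innerSL ℝ (b j.castSucc)).toLinearMap
    (by
      refine (injective_iff_map_eq_zero _).2 fun x hx => ?_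
      have hspan_le : Submodule.span ℝ (Set.range fun i : Fin n => b i.castSucc) ≤ (ℝ ∙ x)ᗮ :=
        Submodule.span_le.2 <| by
          rintro _ ⟨j, rfl⟩
          exact Submodule.mem_orthogonal_singleton_iff_inner_left.2 (congrFun hx j)
      rw [hspan] at hspan_le
      exact inner_self_eq_zero.1 <|
        Submodule.mem_orthogonal_singleton_iff_inner_left.1 (hspan_le Submodule.mem_top))
    (by simp)

variable (hspan : Submodule.span ℝ (Set.range fun i : Fin n => b i.castSucc) = ⊤)

lemma coordEquiv_apply (x : E n) (j : Fin n) : coordEquiv hspan x j = ⟪x, b j.castSucc⟫ := by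
  simp [coordEquiv, LinearMap.linearEquivOfInjective_apply, real_inner_comm]

lemma inner_coordEquiv_symm (y : Fin n → ℝ) {i : Fin (n + 1)} (hi : i ≠ Fin.last n) :
    ⟪(coordEquiv hspan).symm y, b i⟫ = y (i.castPred hi) := by
  obtain ⟨j, rfl⟩ := Fin.exists_castSucc_eq.2 hi
  rw [Fin.castPred_castSucc, ← coordEquiv_apply hspan, ContinuousLinearEquiv.apply_symm_apply]

include hspan in
lemma isUpperSet_preimage_coordEquiv_symm (hn'n : n' ≤ n) (hα : ∀ i ∈ Iprime n n', 0 ≤ α i)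
    (hlast : b (Fin.last n) = ∑ i ∈ Iprime n n', (α i : ℝ) • b i) {s : Set (E n)}
    (hs : UpwardClosed b s) : IsUpperSet ((coordEquiv hspan).symm ⁻¹' s) := by
  intro y y' hyy' hy
  have hcoord : ∀ i, i ≠ Fin.last n →
      ⟪(coordEquiv hspan).symm y, b i⟫ ≤ ⟪(coordEquiv hspan).symm y', b i⟫ := fun i hi => by
    simpa only [inner_coordEquiv_symm hspan _ hi] using hyy' (i.castPred hi)
  refine hs hy fun i => ?_
  by_cases hi : i = Fin.last n
  · subst hi
    simp only [inner_last hlast]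
    exact Finset.sum_le_sum fun i hi' => mul_le_mul_of_nonneg_left
      (hcoord i (ne_of_mem_of_not_mem hi' (last_notMem_Iprime hn'n))) (by exact_mod_cast hα i hi')
  · exact hcoord i hi

include hspan in
theorem contractibleSpace_CSet_diff (hn'n : n' ≤ n) (hα : ∀ i ∈ Iprime n n', 0 ≤ α i)
    (hlast : b (Fin.last n) = ∑ i ∈ Iprime n n', (α i : ℝ) • b i) (hJ : Fin.last n ∉ J)
    {G : Set (E n)} (hG : UpwardClosed b G) (hne : (CSet n b J c \ G).Nonempty) :
    ContractibleSpace ↥(CSet n b J c \ G) := by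
  rw [← (coordEquiv hspan).toHomeomorph.contractibleSpace_preimage_symm_iff,
    ContinuousLinearEquiv.coe_symm_toHomeomorph, Set.preimage_sdiff]
  obtain ⟨x, hx⟩ := hne
  refine contractibleSpace_diff_of_infClosed
    (convex_CSet.linear_preimage (coordEquiv hspan).symm.toLinearEquiv.toLinearMap) ?_
    (isUpperSet_preimage_coordEquiv_symm hspan hn'n hα hlast hG)
    (q := coordEquiv hspan x) (by simpa using hx)
  intro y hy y' hy' i hi
  have hil : i ≠ Fin.last n := ne_of_mem_of_not_mem hi hJ
  have h : (c i : ℝ) < ⟪(coordEquiv hspan).symm y, b i⟫ := hy i hi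
  have h' : (c i : ℝ) < ⟪(coordEquiv hspan).symm y', b i⟫ := hy' i hi
  show (c i : ℝ) < ⟪(coordEquiv hspan).symm (y ⊓ y'), b i⟫
  rw [inner_coordEquiv_symm hspan _ hil] at h h' ⊢
  exact lt_inf_iff.2 ⟨h, h'⟩

include hspan in
lemma exists_mem_CSet_forall_inner_le (hn'n : n' ≤ n) (hαL : 0 < α L)
    (hlast : b (Fin.last n) = ∑ i ∈ Iprime n n', (α i : ℝ) • b i) (hL : L ∈ Iprime n n')
    (hLJ₂ : L ∉ J₂) (hJ₂ : Fin.last n ∉ J₂) :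
    ∃ p ∈ CSet n b J₁ c₁, ∀ j ∈ J₂, (j ∈ J₁ → c₁ j < c₂ j) → ⟪p, b j⟫ ≤ c₂ j := by
  classical
  set t₀ : Fin (n + 1) → ℝ := fun i => if i ∈ J₁ then max ((c₁ i : ℝ) + 1) (c₂ i) else c₂ i
  obtain ⟨T, hT⟩ := exists_gt (max (c₁ L : ℝ)
    ((c₁ (Fin.last n) - ∑ i ∈ (Iprime n n').erase L, α i * t₀ i) / α L))
  set t := Function.update t₀ L T with ht
  set p := (coordEquiv hspan).symm fun k => t k.castSucc
  have hp : ∀ i, i ≠ Fin.last n → ⟪p, b i⟫ = t i := fun i hi => by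
    rw [inner_coordEquiv_symm hspan _ hi, Fin.castSucc_castPred]
  refine ⟨p, fun i hi => ?_, fun j hj hjc => ?_⟩
  · by_cases hil : i = Fin.last n
    · subst hil
      have hαL' : (0 : ℝ) < α L := by exact_mod_cast hαL
      have hT' := (div_lt_iff₀ hαL').1 (lt_of_le_of_lt (le_max_right _ _) hT)
      have hsum : ∑ i ∈ (Iprime n n').erase L, (α i : ℝ) * ⟪p, b i⟫
          = ∑ i ∈ (Iprime n n').erase L, (α i : ℝ) * t₀ i :=
        Finset.sum_congr rfl fun i hi => by
          rw [hp i (ne_of_mem_of_not_mem (Finset.mem_of_mem_erase hi) (last_notMem_Iprime hn'n)),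
            ht, Function.update_of_ne (Finset.ne_of_mem_erase hi)]
      rw [inner_last hlast, ← Finset.add_sum_erase _ _ hL, hsum,
        hp L (ne_of_mem_of_not_mem hL (last_notMem_Iprime hn'n)), ht, Function.update_self]
      linarith
    · rw [hp i hil]
      by_cases hiL : i = L
      · subst hiL
        simpa [t] using lt_of_le_of_lt (le_max_left _ _) hT
      · simp only [t, Function.update_of_ne hiL, t₀, if_pos hi]
        exact lt_max_of_lt_left (lt_add_one _)
  · have hjl : j ≠ Fin.last n := ne_of_mem_of_not_mem hj hJ₂
    have hjL : j ≠ L := ne_of_mem_of_not_mem hj hLJ₂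
    rw [hp j hjl]
    simp only [t, Function.update_of_ne hjL, t₀]
    split_ifs with hjJ₁
    · exact max_le (by exact_mod_cast hjc hjJ₁) le_rfl
    · exact le_rfl

include hspan in
theorem nonempty_and_contractibleSpace_FSetB_diff_CSet (hn'n : n' ≤ n)
    (hα : ∀ i ∈ Iprime n n', 0 < α i) (hαsum : ∑ i ∈ Iprime n n', α i ≤ 1)
    (hlast : b (Fin.last n) = ∑ i ∈ Iprime n n', (α i : ℝ) • b i) (hJ₁ : Fin.last n ∈ J₁)
    (hJ₂ : Fin.last n ∉ J₂) (hi₀ : i₀ ∈ Iprime n n' \ J₁) (hL : L ∈ Iprime n n')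
    (hLJ₂ : L ∉ J₂) (hC : ¬ CSet n b J₁ c₁ ⊆ CSet n b J₂ c₂) :
    (FSetB n n' b α J₁ i₀ c₁ \ CSet n b J₂ c₂).Nonempty ∧
      ContractibleSpace ↥(FSetB n n' b α J₁ i₀ c₁ \ CSet n b J₂ c₂) := by
  obtain ⟨p, hpC, hp⟩ := exists_mem_CSet_forall_inner_le (J₁ := J₁)
    (c₁ := c₁ + Pi.single (Fin.last n) 1) (c₂ := c₂) hspan hn'n (hα L hL) hlast hL hLJ₂ hJ₂
  have hwit : ∀ x ∈ CSet n b J₁ c₁, x ∉ CSet n b J₂ c₂ →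
      ∃ j ∈ J₂, j ≠ Fin.last n ∧ ⟪x, b j⟫ ≤ c₂ j ∧ ⟪p, b j⟫ ≤ c₂ j := by
    intro x hx hx'
    obtain ⟨j, hj, hxj⟩ : ∃ j ∈ J₂, ⟪x, b j⟫ ≤ c₂ j := by
      simpa [CSet] using hx'
    have hjl : j ≠ Fin.last n := ne_of_mem_of_not_mem hj hJ₂
    refine ⟨j, hj, hjl, hxj, hp j hj fun hjJ₁ => ?_⟩
    have : (c₁ j : ℝ) < c₂ j := (hx j hjJ₁).trans_le hxj
    simpa [Pi.single_apply, hjl] using this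
  have hpD : p ∈ FSetB n n' b α J₁ i₀ c₁ \ CSet n b J₂ c₂ := by
    refine ⟨CSet_subset_FSetB hα hαsum hlast hJ₁ hi₀ hpC, fun hpC₂ => ?_⟩
    obtain ⟨x₀, hx₀, hx₀'⟩ := Set.not_subset.1 hC
    obtain ⟨j, hj, -, -, hpj⟩ := hwit x₀ hx₀ hx₀'
    exact (hpC₂ j hj).not_ge hpj
  refine ⟨⟨p, hpD⟩, ?_⟩
  rw [← (coordEquiv hspan).toHomeomorph.contractibleSpace_preimage_symm_iff,
    ContinuousLinearEquiv.coe_symm_toHomeomorph, Set.preimage_sdiff]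
  refine contractibleSpace_diff_of_supClosed (q := coordEquiv hspan p)
    (isUpperSet_preimage_coordEquiv_symm hspan hn'n (fun i hi => (hα i hi).le) hlast
      upwardClosed_FSetB) (by simpa using hpD) ?_
  rintro y ⟨hyF, hyC⟩
  obtain ⟨j, hj, hjl, hyj, hpj⟩ :=
    hwit _ (FSetB_subset_CSet hα hlast hi₀ hyF) hyC
  refine ⟨{z | z (j.castPred hjl) ≤ c₂ j}, convex_halfSpace_le (LinearMap.proj _).isLinear _,
    fun z hz z' hz' => show max (z _) (z' _) ≤ _ from max_le hz hz',
    Set.disjoint_left.2 fun z hz hzC => ?_, ?_, ?_⟩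
  · exact (hzC j hj).not_ge (by rwa [inner_coordEquiv_symm hspan _ hjl])
  · simpa [inner_coordEquiv_symm hspan _ hjl] using hyj
  · simpa [coordEquiv_apply] using hpj

end SetupB

theorem stmt5_general (n n' : ℕ) (hn'n : n' ≤ n)
    (b : Fin (n + 1) → E n) (α : Fin (n + 1) → ℚ)
    (hspan : Submodule.span ℝ (Set.range fun i : Fin n => b i.castSucc) = ⊤)
    (hα : ∀ i : Fin (n + 1), i.val < n' → 0 < α i)
    (hαsum : ∑ i ∈ Iprime n n', α i ≤ 1)
    (hlast : b (Fin.last n) = ∑ i ∈ Iprime n n', (α i : ℝ) • b i)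
    (J₁ J₂ : Finset (Fin (n + 1)))
    (hJ₂I : ¬ Iprime n n' ⊆ J₂)
    (hor : Fin.last n ∉ J₁ ∨ Fin.last n ∉ J₂)
    (i₁₀ i₂₀ : Fin (n + 1))
    (hi₁₀ : Fin.last n ∈ J₁ → i₁₀ ∈ Iprime n n' \ J₁)
    (hi₂₀ : Fin.last n ∈ J₂ → i₂₀ ∈ Iprime n n' \ J₂)
    (c₁ c₂ : Fin (n + 1) → ℤ)
    (hC : ¬ CSet n b J₁ c₁ ⊆ CSet n b J₂ c₂) :
    (FSetB' n n' b α J₁ i₁₀ c₁ \ FSetB' n n' b α J₂ i₂₀ c₂).Nonempty ∧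
      ContractibleSpace ↥(FSetB' n n' b α J₁ i₁₀ c₁ \ FSetB' n n' b α J₂ i₂₀ c₂) := by
  have hαI : ∀ i ∈ Iprime n n', 0 < α i := fun i hi => hα i (by simpa [Iprime] using hi)
  by_cases hJ₁ : Fin.last n ∈ J₁
  · have hJ₂ : Fin.last n ∉ J₂ := hor.resolve_left (not_not.2 hJ₁)
    obtain ⟨L, hL, hLJ₂⟩ := Finset.not_subset.1 hJ₂I
    rw [FSetB', FSetB', if_pos hJ₁, if_neg hJ₂]
    exact SetupB.nonempty_and_contractibleSpace_FSetB_diff_CSet hspan hn'n hαI hαsum hlast hJ₁ hJ₂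
      (hi₁₀ hJ₁) hL hLJ₂ hC
  · rw [show FSetB' n n' b α J₁ i₁₀ c₁ = CSet n b J₁ c₁ from if_neg hJ₁]
    obtain ⟨x₀, hx₀, hx₀'⟩ := Set.not_subset.1 hC
    have hne : (CSet n b J₁ c₁ \ FSetB' n n' b α J₂ i₂₀ c₂).Nonempty :=
      ⟨x₀, hx₀, fun h => hx₀' (SetupB.FSetB'_subset_CSet hαI hlast hi₂₀ h)⟩
    exact ⟨hne, SetupB.contractibleSpace_CSet_diff hspan hn'n (fun i hi => (hαI i hi).le) hlast
      hJ₁ SetupB.upwardClosed_FSetB' hne⟩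

/-- Setup B: for `J₁, J₂ ∈ Λ` with `n+1 ∉ J₁` or `n+1 ∉ J₂` (and a
choice of `i₀ ∈ I'∖J` for each of `J₁, J₂` that contains `n+1`): if `C(J₁,c¹)` is
not contained in `C(J₂,c²)`, then `F(J₁,c¹) ∖ F(J₂,c²)` is nonempty and, with the
subspace topology from `ℝⁿ`, contractible. -/
theorem stmt5 (n n' : ℕ) (hn'1 : 1 ≤ n') (hn'n : n' ≤ n)
    (b : Fin (n + 1) → E n) (α : Fin (n + 1) → ℚ)
    (hb : LinearIndependent ℝ fun i : Fin n => b i.castSucc)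
    (hspan : Submodule.span ℝ (Set.range fun i : Fin n => b i.castSucc) = ⊤)
    (hα : ∀ i : Fin (n + 1), i.val < n' → 0 < α i)
    (hαsum : ∑ i ∈ Iprime n n', α i ≤ 1)
    (hlast : b (Fin.last n) = ∑ i ∈ Iprime n n', (α i : ℝ) • b i)
    (J₁ J₂ : Finset (Fin (n + 1)))
    (hJ₁ne : J₁ ≠ Finset.univ) (hJ₁I : ¬ Iprime n n' ⊆ J₁)
    (hJ₂ne : J₂ ≠ Finset.univ) (hJ₂I : ¬ Iprime n n' ⊆ J₂)
    (hor : Fin.last n ∉ J₁ ∨ Fin.last n ∉ J₂)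
    (i₁₀ i₂₀ : Fin (n + 1))
    (hi₁₀ : Fin.last n ∈ J₁ → i₁₀ ∈ Iprime n n' \ J₁)
    (hi₂₀ : Fin.last n ∈ J₂ → i₂₀ ∈ Iprime n n' \ J₂)
    (c₁ c₂ : Fin (n + 1) → ℤ)
    (hC : ¬ CSet n b J₁ c₁ ⊆ CSet n b J₂ c₂) :
    (FSetB' n n' b α J₁ i₁₀ c₁ \ FSetB' n n' b α J₂ i₂₀ c₂).Nonempty ∧
      ContractibleSpace ↥(FSetB' n n' b α J₁ i₁₀ c₁ \ FSetB' n n' b α J₂ i₂₀ c₂) :=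
  stmt5_general n n' hn'n b α hspan hα hαsum hlast J₁ J₂ hJ₂I hor i₁₀ i₂₀ hi₁₀ hi₂₀ c₁ c₂ hC
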